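/- Let X be a compact Hausdorff space, A a commutative Banach algebra with a bounded net (e_v) such that (σ(e_v)) is a bounded approximate identity for A, where σ ∈ Hom(A) has dense range. If A is σ-weakly amenable, then C(X,A) is σ̃-weakly amenable, where σ̃(f) = σ ∘ f. -/

import Mathlib

/-!
Write `φ ⊗ a` for the elementary tensor `x ↦ φ x • a` in `C(X, A)`; by a partition of unity these
span a dense subspace. Let `D` be a `σ̃`-derivation into the dual. With a constant function in the
first slot, `D` restricts to a `σ`-derivation of `A`, which is inner by `σ`-weak amenability and
hence zero because `A` is commutative. This lets `A`-factors be moved across `D`, so for fixed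
`a, c ∈ A` the form `(φ, χ) ↦ D (φ ⊗ a) (χ ⊗ c)` is a derivation of `C(X, ℂ)` into its dual: first
for products `a = u w`, then for every `a` since the approximate identity makes products dense.
A commutative C⋆-algebra has no nonzero such derivation `B`: for self-adjoint `h` and
`g = i t h`, the Leibniz rule gives `B (exp g) r = B g (exp g * r)`, and `exp g` is unitary, so
`|t| ‖B h r‖` stays bounded in `t`. Hence `D` vanishes on elementary tensors, so `D = 0`.
-/

/-- `σ`-weak amenability of a Banach algebra `B`: every bounded `σ`-derivation
`D : B → B*` into the dual bimodule `B*` (with actions `(b·Λ)(x) = Λ(x b)`,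
`(Λ·b)(x) = Λ(b x)`) is `σ`-inner. -/
def SigmaWeaklyAmenable (B : Type u) [NonUnitalNormedRing B] [NormedSpace ℂ B]
    (s : B → B) : Prop :=
  ∀ D : B →L[ℂ] (B →L[ℂ] ℂ),
    (∀ a b x, D (a * b) x = D a (s b * x) + D b (x * s a)) →
    ∃ Λ : B →L[ℂ] ℂ, ∀ a x, D a x = Λ (x * s a) - Λ (s a * x)

open Filter NormedSpace

def IsSigmaDerivation {B : Type*} [NonUnitalNormedRing B] [NormedSpace ℂ B] (s : B → B)
    (D : B →L[ℂ] B →L[ℂ] ℂ) : Prop :=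
  ∀ a b x, D (a * b) x = D a (s b * x) + D b (x * s a)

theorem SigmaWeaklyAmenable.apply_eq_zero {B : Type*} [NonUnitalNormedRing B] [NormedSpace ℂ B]
    {s : B → B} (h : SigmaWeaklyAmenable B s) (hcomm : ∀ a b : B, a * b = b * a)
    {D : B →L[ℂ] B →L[ℂ] ℂ} (hD : IsSigmaDerivation s D) (a x : B) : D a x = 0 := by
  obtain ⟨Λ, hΛ⟩ := h D hD
  rw [hΛ, hcomm, sub_self]

namespace IsSigmaDerivation

section CommBanachAlgebra

open scoped Nat

variable {R : Type*} [NormedCommRing R] [NormedAlgebra ℂ R] {B : R →L[ℂ] R →L[ℂ] ℂ}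

theorem apply_mul (hB : IsSigmaDerivation id B) (p q r : R) :
    B (p * q) r = B p (q * r) + B q (r * p) :=
  hB p q r

theorem apply_one (hB : IsSigmaDerivation id B) (r : R) : B 1 r = 0 := by
  simpa using hB.apply_mul 1 1 r

theorem apply_pow_succ (hB : IsSigmaDerivation id B) (g r : R) (n : ℕ) :
    B (g ^ (n + 1)) r = (n + 1 : ℂ) • B g (g ^ n * r) := by
  induction n generalizing r with
  | zero => simp
  | succ n ih =>
    rw [pow_succ' g (n + 1), hB.apply_mul, ih, mul_comm r g, ← mul_assoc, ← pow_succ]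
    push_cast
    module

theorem apply_exp [CompleteSpace R] (hB : IsSigmaDerivation id B) (g r : R) :
    B (exp g) r = B g (exp g * r) := by
  have hexp := exp_series_hasSum_exp' (𝕂 := ℂ) g
  have hleft : HasSum (fun n : ℕ => B (((n + 1)! : ℂ)⁻¹ • g ^ (n + 1)) r) (B (exp g) r) := by
    rw [← sub_zero (B (exp g) r), ← hB.apply_one r]
    simpa using (hasSum_nat_add_iff' 1).2 (hexp.mapL (B.flip r))
  have hright : HasSum (fun n : ℕ => B g (((n ! : ℂ)⁻¹ • g ^ n) * r)) (B g (exp g * r)) :=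
    hexp.mapL ((B g).comp ((ContinuousLinearMap.mul ℂ R).flip r))
  refine hleft.unique (hright.congr_fun fun n => ?_)
  rw [map_smul, smul_apply, hB.apply_pow_succ, smul_smul, smul_mul_assoc, map_smul,
    Nat.factorial_succ, Nat.cast_mul, mul_inv, mul_comm _ (n ! : ℂ)⁻¹, mul_assoc, Nat.cast_succ,
    inv_mul_cancel₀ (Nat.cast_add_one_ne_zero n), mul_one]

end CommBanachAlgebra

section CommCStarAlgebra

variable {R : Type*} [CommCStarAlgebra R] {B : R →L[ℂ] R →L[ℂ] ℂ}

theorem abs_mul_norm_apply_le (hB : IsSigmaDerivation id B) {a : R} (ha : IsSelfAdjoint a)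
    (r : R) (t : ℝ) : |t| * ‖B a r‖ ≤ ‖B‖ * ‖r‖ := by
  cases subsingleton_or_nontrivial R
  · simp [Subsingleton.elim a 0]
  let +nondep : NormedAlgebra ℚ R := .restrictScalars ℚ ℂ R
  set g : R := (t * Complex.I : ℂ) • a
  have hg : star g = -g := by
    simp [g, ha.star_eq, star_smul, Complex.conj_ofReal]
  have hu : exp g ∈ unitary R := exp_mem_unitary_of_mem_skewAdjoint hg
  have hinv : exp g * exp (-g) = 1 := by
    rw [← exp_add_of_commute (Commute.refl g).neg_right, add_neg_cancel, exp_zero]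
  have hexp := hB.apply_exp g (exp (-g) * r)
  rw [← mul_assoc, hinv, one_mul] at hexp
  calc |t| * ‖B a r‖ = ‖B g r‖ := by simp [g]
  _ = ‖B (exp g) (exp (-g) * r)‖ := by rw [hexp]
  _ ≤ ‖B‖ * ‖exp g‖ * ‖exp (-g) * r‖ := B.le_opNorm₂ _ _
  _ = ‖B‖ * ‖r‖ := by
    rw [← hg, ← star_exp, CStarRing.norm_of_mem_unitary hu, mul_one,
      CStarRing.norm_coe_unitary_mul ⟨_, Unitary.star_mem hu⟩]

theorem apply_eq_zero_of_isSelfAdjoint (hB : IsSigmaDerivation id B) {a : R}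
    (ha : IsSelfAdjoint a) (r : R) : B a r = 0 := by
  by_contra h
  have hpos : 0 < ‖B a r‖ := norm_pos_iff.2 h
  have := hB.abs_mul_norm_apply_le ha r ((‖B‖ * ‖r‖ + 1) / ‖B a r‖)
  rw [abs_of_nonneg (by positivity), div_mul_cancel₀ _ hpos.ne'] at this
  linarith

theorem apply_eq_zero (hB : IsSigmaDerivation id B) (a r : R) : B a r = 0 := by
  rw [← realPart_add_I_smul_imaginaryPart a, map_add, map_smul, add_apply, smul_apply,
    hB.apply_eq_zero_of_isSelfAdjoint (realPart a).2,
    hB.apply_eq_zero_of_isSelfAdjoint (imaginaryPart a).2, smul_zero, add_zero]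

end CommCStarAlgebra

end IsSigmaDerivation

namespace ContinuousMap

variable {X A : Type*} [TopologicalSpace X] [CompactSpace X] [NormedAddCommGroup A]
  [NormedSpace ℂ A]

noncomputable def smulConstL : C(X, ℂ) →L[ℂ] A →L[ℂ] C(X, A) :=
  LinearMap.mkContinuous₂
    (LinearMap.mk₂ ℂ (fun φ a => ⟨fun x => φ x • a, by fun_prop⟩)
      (fun φ ψ a => by ext; simp [add_smul])
      (fun c φ a => by ext; simp [smul_smul])
      (fun φ a b => by ext; simp [smul_add])
      (fun c φ a => by ext; exact smul_comm _ _ _))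
    1 fun φ a => by
      rw [one_mul]
      refine (norm_le _ (by positivity)).2 fun x => ?_
      simpa [norm_smul] using mul_le_mul_of_nonneg_right (φ.norm_coe_le_norm x) (norm_nonneg a)

@[simp]
theorem smulConstL_apply (φ : C(X, ℂ)) (a : A) (x : X) : smulConstL φ a x = φ x • a :=
  rfl

theorem dense_span_smulConstL [T2Space X] :
    Dense (Submodule.span ℂ {f : C(X, A) | ∃ φ a, smulConstL φ a = f} : Set C(X, A)) := by
  refine Metric.dense_iff.2 fun g ε hε => ?_
  obtain ⟨ρ, hρ⟩ := PartitionOfUnity.exists_isSubordinate isClosed_univ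
    (fun i => g ⁻¹' Metric.ball (g i) (ε / 2)) (fun i => Metric.isOpen_ball.preimage g.continuous)
    (fun x _ => Set.mem_iUnion.2 ⟨x, by simpa using half_pos hε⟩)
  set T := ρ.locallyFinite.finite_nonempty_of_compact.toFinset
  have hT (x : X) : (Function.support fun i => ρ i x • g i) ⊆ T := fun i hi => by
    simp only [T, Set.Finite.coe_toFinset, Set.mem_ofPred_eq]
    exact ⟨x, Function.support_smul_subset_left (fun i => ρ i x) g hi⟩
  refine ⟨∑ i ∈ T, smulConstL ⟨fun x => (ρ i x : ℂ), by fun_prop⟩ (g i), ?_,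
    Submodule.sum_mem _ fun i _ => Submodule.subset_span ⟨_, _, rfl⟩⟩
  rw [Metric.mem_ball, dist_comm]
  refine ((dist_le (half_pos hε).le).2 fun x => ?_).trans_lt (half_lt_self hε)
  have hmem : ∑ᶠ i, ρ i x • g i ∈ Metric.closedBall (g x) (ε / 2) :=
    ρ.finsum_smul_mem_convex (g := fun i _ => g i) (Set.mem_univ x)
      (fun i hi => Metric.mem_closedBall'.2 (hρ i (subset_closure hi)).le) (convex_closedBall _ _)
  rw [finsum_eq_sum_of_support_subset _ (hT x)] at hmem
  simpa [Complex.coe_smul, dist_comm] using hmem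

theorem map_smulConstL {σ : A →L[ℂ] A} {σt : C(X, A) →L[ℂ] C(X, A)}
    (hσt : ∀ f x, σt f x = σ (f x)) (φ : C(X, ℂ)) (a : A) :
    σt (smulConstL φ a) = smulConstL φ (σ a) := by
  ext; simp [hσt]

end ContinuousMap

theorem ContinuousMap.smulConstL_mul_smulConstL {X A : Type*} [TopologicalSpace X]
    [CompactSpace X] [NonUnitalNormedRing A] [NormedSpace ℂ A] [IsScalarTower ℂ A A]
    [SMulCommClass ℂ A A]
    (φ ψ : C(X, ℂ)) (a b : A) :
    smulConstL φ a * smulConstL ψ b = smulConstL (φ * ψ) (a * b) := by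
  ext x
  simp [smul_mul_smul_comm]

namespace IsSigmaDerivation

open ContinuousMap

variable {X A : Type*} [TopologicalSpace X] [CompactSpace X] [NonUnitalNormedRing A]
  [NormedSpace ℂ A] [IsScalarTower ℂ A A] [SMulCommClass ℂ A A] {σ : A →L[ℂ] A}
  {σt : C(X, A) →L[ℂ] C(X, A)} {D : C(X, A) →L[ℂ] C(X, A) →L[ℂ] ℂ}

theorem apply_one_smulConstL (hcomm : ∀ a b : A, a * b = b * a)
    (hwa : SigmaWeaklyAmenable A σ) (hσt : ∀ f x, σt f x = σ (f x))
    (hD : IsSigmaDerivation σt D) (a : A) (χ : C(X, ℂ)) (c : A) :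
    D (smulConstL 1 a) (smulConstL χ c) = 0 := by
  refine hwa.apply_eq_zero hcomm (D := D.bilinearComp (smulConstL 1) (smulConstL χ))
    (fun a b m => ?_) a c
  simp only [ContinuousLinearMap.bilinearComp_apply]
  have hmul : smulConstL (1 : C(X, ℂ)) (a * b) = smulConstL 1 a * smulConstL 1 b := by
    rw [smulConstL_mul_smulConstL, mul_one]
  rw [hmul, hD, map_smulConstL hσt, map_smulConstL hσt, smulConstL_mul_smulConstL,
    smulConstL_mul_smulConstL, one_mul, mul_one]

theorem apply_smulConstL_mul (hcomm : ∀ a b : A, a * b = b * a)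
    (hwa : SigmaWeaklyAmenable A σ) (hσt : ∀ f x, σt f x = σ (f x))
    (hD : IsSigmaDerivation σt D) (φ ψ χ : C(X, ℂ)) (u w c : A) :
    D (smulConstL (φ * ψ) (u * w)) (smulConstL χ c) =
      D (smulConstL φ (u * w)) (smulConstL (ψ * χ) c) +
        D (smulConstL ψ (u * w)) (smulConstL (χ * φ) c) := by
  have hfactor (φ ψ : C(X, ℂ)) (u w c : A) :
      D (smulConstL φ (u * w)) (smulConstL ψ c) =
        D (smulConstL φ u) (smulConstL ψ (σ w * c)) := by
    have hmul : smulConstL φ (u * w) = smulConstL φ u * smulConstL 1 w := by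
      rw [smulConstL_mul_smulConstL, mul_one]
    rw [hmul, hD, map_smulConstL hσt, map_smulConstL hσt,
      smulConstL_mul_smulConstL, smulConstL_mul_smulConstL, apply_one_smulConstL hcomm hwa hσt hD,
      add_zero, one_mul]
  rw [← smulConstL_mul_smulConstL, hD, map_smulConstL hσt, map_smulConstL hσt,
    smulConstL_mul_smulConstL, smulConstL_mul_smulConstL, hfactor, hcomm u w, hfactor, hcomm c]

theorem apply_smulConstL_eq_zero (hcomm : ∀ a b : A, a * b = b * a)
    (hwa : SigmaWeaklyAmenable A σ) (hσt : ∀ f x, σt f x = σ (f x))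
    (hD : IsSigmaDerivation σt D) (hprod : Dense {a : A | ∃ u w, u * w = a})
    (φ : C(X, ℂ)) (a : A) (χ : C(X, ℂ)) (c : A) :
    D (smulConstL φ a) (smulConstL χ c) = 0 := by
  have hleibniz : IsSigmaDerivation id
      (D.bilinearComp (smulConstL.flip a) (smulConstL.flip c)) := fun φ ψ χ => by
    simp only [ContinuousLinearMap.bilinearComp_apply, ContinuousLinearMap.flip_apply, id]
    induction a using hprod.induction with
    | mem _ hmem =>
      obtain ⟨u, w, rfl⟩ := hmem
      exact apply_smulConstL_mul hcomm hwa hσt hD φ ψ χ u w c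
    | isClosed => exact isClosed_eq (by fun_prop) (by fun_prop)
  exact hleibniz.apply_eq_zero φ χ

theorem eq_zero [T2Space X] (hcomm : ∀ a b : A, a * b = b * a)
    (hwa : SigmaWeaklyAmenable A σ) (hσt : ∀ f x, σt f x = σ (f x))
    (hD : IsSigmaDerivation σt D) (hprod : Dense {a : A | ∃ u w, u * w = a}) : D = 0 := by
  refine ContinuousLinearMap.ext_on dense_span_smulConstL ?_
  rintro _ ⟨φ, a, rfl⟩
  refine ContinuousLinearMap.ext_on dense_span_smulConstL ?_
  rintro _ ⟨χ, c, rfl⟩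
  exact hD.apply_smulConstL_eq_zero hcomm hwa hσt hprod φ a χ c

end IsSigmaDerivation

theorem stmt10_general {X A : Type u} [TopologicalSpace X] [CompactSpace X] [T2Space X]
    [NonUnitalNormedRing A] [NormedSpace ℂ A] [IsScalarTower ℂ A A]
    [SMulCommClass ℂ A A]
    (hcomm : ∀ a b : A, a * b = b * a)
    (σ : A →L[ℂ] A)
    {ι : Type u} [Nonempty ι] [Preorder ι] [IsDirected ι (· ≤ ·)]
    (e : ι → A)
    (hbai : ∀ a : A, Tendsto (fun v => σ (e v) * a) atTop (nhds a) ∧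
      Tendsto (fun v => a * σ (e v)) atTop (nhds a))
    (hwa : SigmaWeaklyAmenable A σ)
    (σt : C(X, A) →L[ℂ] C(X, A)) (hσt : ∀ (f : C(X, A)) (x : X), σt f x = σ (f x)) :
    SigmaWeaklyAmenable C(X, A) σt := by
  intro D hD
  have hprod : Dense {a : A | ∃ u w, u * w = a} := fun a =>
    mem_closure_of_tendsto (hbai a).1 (Eventually.of_forall fun v => ⟨_, _, rfl⟩)
  refine ⟨0, fun f g => ?_⟩
  rw [IsSigmaDerivation.eq_zero hcomm hwa hσt hD hprod]
  simp

/-- let `A` be a commutative Banach algebra with a bounded net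
`(e_v)` such that `(σ(e_v))` is a bounded approximate identity for `A`, where
`σ ∈ Hom(A)` has dense range. If `A` is `σ`-weakly amenable, then `C(X,A)` is
`σ̃`-weakly amenable, where `σ̃ f = σ ∘ f`. -/
theorem stmt10 {X A : Type u} [TopologicalSpace X] [CompactSpace X] [T2Space X]
    [NonUnitalNormedRing A] [NormedSpace ℂ A] [IsScalarTower ℂ A A]
    [SMulCommClass ℂ A A] [CompleteSpace A]
    (hcomm : ∀ a b : A, a * b = b * a)
    (σ : A →L[ℂ] A) (hσ : ∀ a b : A, σ (a * b) = σ a * σ b)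
    (hdense : DenseRange σ)
    {ι : Type u} [Nonempty ι] [Preorder ι] [IsDirected ι (· ≤ ·)]
    (e : ι → A) (hbdd : ∃ M : ℝ, ∀ v, ‖e v‖ ≤ M)
    (hbai : ∀ a : A, Tendsto (fun v => σ (e v) * a) atTop (nhds a) ∧
      Tendsto (fun v => a * σ (e v)) atTop (nhds a))
    (hwa : SigmaWeaklyAmenable A σ)
    (σt : C(X, A) →L[ℂ] C(X, A)) (hσt : ∀ (f : C(X, A)) (x : X), σt f x = σ (f x)) :
    SigmaWeaklyAmenable C(X, A) σt :=
  stmt10_general hcomm σ e hbai hwa σt hσt
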